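/- Let (m₁, m₂) be a linear pair of matching dependencies over distinct relational predicates R and S, i.e., the MD graph of {m₁, m₂} has exactly one edge, from m₁ to m₂, and is acyclic (in particular RHS(m₁) ∩ LHS(m₁) = ∅ and RHS(m₂) ∩ LHS(m₂) = ∅). Assume moreover that the set {m₁, m₂} is pair-preserving and that LHS(m₁) ∩ LHS(m₂) = ∅. Then no R-equivalent set and no S-equivalent set of (m₁, m₂) is bound; that is, for every equivalence class E of TC(B_R) (respectively TC(B_S)) that contains an attribute of LHS(m₂), we have E ∩ LHS(m₁) = ∅. (This is the paper's claim that, under the pair-preserving requirement used in its main theorem, there cannot be a bound equivalent set for any pair of MDs in the set, which is why the boundedness condition of the linear-pair theorem does not appear in the main theorem.) -/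

import Mathlib

/-- A matching dependency (MD) over two distinct relational predicates `R` and `S`:
`α` is the type of attributes of `R`, `β` the type of attributes of `S`.
Each conjunct `R[A] ≈ S[B]` (on the LHS) or `R[A] ≐ S[B]` (on the RHS)
pairs an attribute of `R` with an attribute of `S`; we record the finite sets
of such pairs. -/
structure MD2 (α β : Type*) where
  lhsP : Finset (α × β)
  rhsP : Finset (α × β)

variable {α β : Type*}

/-- `LHS(m)`: the set of attributes (of `R`, tagged `Sum.inl`, or of `S`,
tagged `Sum.inr`) occurring on the left-hand side of `m`. -/
def lhsAttrs (m : MD2 α β) : Set (α ⊕ β) :=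
  {x | ∃ p ∈ m.lhsP, x = Sum.inl p.1 ∨ x = Sum.inr p.2}

/-- `RHS(m)`: the set of attributes occurring on the right-hand side of `m`. -/
def rhsAttrs (m : MD2 α β) : Set (α ⊕ β) :=
  {x | ∃ p ∈ m.rhsP, x = Sum.inl p.1 ∨ x = Sum.inr p.2}

/-- Edge of the MD graph: from `m` to `m'` iff `RHS(m) ∩ LHS(m') ≠ ∅`. -/
def MDEdge (m m' : MD2 α β) : Prop := (rhsAttrs m ∩ lhsAttrs m').Nonempty

/-- `(m₁, m₂)` is a linear pair: the MD graph of `{m₁, m₂}` has exactly one edge,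
from `m₁` to `m₂` (in particular it is acyclic: no self-loops, so
`RHS(m₁) ∩ LHS(m₁) = ∅` and `RHS(m₂) ∩ LHS(m₂) = ∅`). -/
def LinearPair (m₁ m₂ : MD2 α β) : Prop :=
  MDEdge m₁ m₂ ∧ ¬ MDEdge m₂ m₁ ∧ ¬ MDEdge m₁ m₁ ∧ ¬ MDEdge m₂ m₂

/-- `LRel(m)`: the symmetric relation on attributes relating `R[A]` and `S[B]`
whenever the conjunct `R[A] ≈ S[B]` appears in `LHS(m)`. -/
def LRel (m : MD2 α β) (x y : α ⊕ β) : Prop :=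
  ∃ p ∈ m.lhsP, (x = Sum.inl p.1 ∧ y = Sum.inr p.2) ∨ (x = Sum.inr p.2 ∧ y = Sum.inl p.1)

/-- `RRel(m)`: the symmetric relation on attributes relating `R[A]` and `S[B]`
whenever the conjunct `R[A] ≐ S[B]` appears in `RHS(m)`. -/
def RRel (m : MD2 α β) (x y : α ⊕ β) : Prop :=
  ∃ p ∈ m.rhsP, (x = Sum.inl p.1 ∧ y = Sum.inr p.2) ∨ (x = Sum.inr p.2 ∧ y = Sum.inl p.1)

/-- `x` and `y` are in the same L-component of `m`: they are related by the
reflexive and transitive closure of `LRel(m)`. -/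
def SameLComp (m : MD2 α β) (x y : α ⊕ β) : Prop := Relation.ReflTransGen (LRel m) x y

/-- `x` and `y` are in the same R-component of `m`. -/
def SameRComp (m : MD2 α β) (x y : α ⊕ β) : Prop := Relation.ReflTransGen (RRel m) x y

/-- The relation `B_R` on attributes of `R`: `(R[U₁], R[U₂]) ∈ B_R` iff `R[U₁]`
and `R[U₂]` are in the same R-component of `m₁` or the same L-component of `m₂`. -/
def BR (m₁ m₂ : MD2 α β) (u₁ u₂ : α) : Prop :=
  SameRComp m₁ (Sum.inl u₁) (Sum.inl u₂) ∨ SameLComp m₂ (Sum.inl u₁) (Sum.inl u₂)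

/-- The relation `B_S` on attributes of `S`, defined analogously. -/
def BS (m₁ m₂ : MD2 α β) (u₁ u₂ : β) : Prop :=
  SameRComp m₁ (Sum.inr u₁) (Sum.inr u₂) ∨ SameLComp m₂ (Sum.inr u₁) (Sum.inr u₂)

/-- All conjuncts (pairs of compared attributes) of `m`. -/
def conjs [DecidableEq α] [DecidableEq β] (m : MD2 α β) : Finset (α × β) :=
  m.lhsP ∪ m.rhsP

/-- `{m₁, m₂}` is pair-preserving: for any attribute `R[A]` occurring in an MD,
there is only one attribute `S[B]` such that `R[A] ≈ S[B]` or `R[A] ≐ S[B]`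
occurs in an MD. -/
def PairPreserving [DecidableEq α] [DecidableEq β] (m₁ m₂ : MD2 α β) : Prop :=
  ∀ (a : α) (b b' : β),
    (a, b) ∈ conjs m₁ ∪ conjs m₂ → (a, b') ∈ conjs m₁ ∪ conjs m₂ → b = b'

/-!
Pair preservation says that every attribute `R[a]` is compared with at most one attribute
`S[b]` in the whole pair, so each connected component of the comparison graph is a star
around a single `S`-attribute. Sending `R[a]` to the centre `S[b]` of its star (and fixing
attributes of `S`) is therefore constant on every R-component of `m₁` and every L-component
of `m₂`, hence on every class of `TC(B_R)` and of `TC(B_S)`, and it maps `LHS(m)` into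
`LHS(m)`. An equivalent set meeting both `LHS(m₁)` and `LHS(m₂)` would thus produce an
attribute in `LHS(m₁) ∩ LHS(m₂)`.
-/

theorem Relation.ReflTransGen.apply_eq {γ δ : Type*} {r : γ → γ → Prop} {f : γ → δ}
    (hf : ∀ x y, r x y → f x = f y) {x y : γ} (h : Relation.ReflTransGen r x y) :
    f x = f y := by
  induction h with
  | refl => rfl
  | tail _ hyz ih => exact ih.trans (hf _ _ hyz)

namespace MD2

open Classical in
/-- The centre of the star containing an attribute, for a comparison relation `r`
in which every attribute of `R` has at most one partner. -/
noncomputable def anchor (r : α → β → Prop) : α ⊕ β → α ⊕ β :=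
  Sum.elim (fun a => if h : ∃ b, r a b then Sum.inr h.choose else Sum.inl a) Sum.inr

variable {r : α → β → Prop}

theorem anchor_inl_of_rel (hr : Relator.RightUnique r) {a : α} {b : β} (h : r a b) :
    anchor r (Sum.inl a) = Sum.inr b := by
  have hex : ∃ b, r a b := ⟨b, h⟩
  simp only [anchor, Sum.elim_inl, dif_pos hex, hr hex.choose_spec h]

theorem anchor_eq_of_reflTransGen (hr : Relator.RightUnique r) {P : Finset (α × β)}
    (hP : ∀ p ∈ P, r p.1 p.2) {x y : α ⊕ β}
    (h : Relation.ReflTransGen (fun x y => ∃ p ∈ P, (x = Sum.inl p.1 ∧ y = Sum.inr p.2) ∨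
      (x = Sum.inr p.2 ∧ y = Sum.inl p.1)) x y) :
    anchor r x = anchor r y := by
  refine h.apply_eq ?_
  rintro _ _ ⟨p, hp, ⟨rfl, rfl⟩ | ⟨rfl, rfl⟩⟩
  · exact anchor_inl_of_rel hr (hP p hp)
  · exact (anchor_inl_of_rel hr (hP p hp)).symm

theorem anchor_mem_lhsAttrs (hr : Relator.RightUnique r) {m : MD2 α β}
    (hm : ∀ p ∈ m.lhsP, r p.1 p.2) {x : α ⊕ β} (hx : x ∈ lhsAttrs m) :
    anchor r x ∈ lhsAttrs m := by
  obtain ⟨p, hp, rfl | rfl⟩ := hx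
  · rw [anchor_inl_of_rel hr (hm p hp)]
    exact ⟨p, hp, Or.inr rfl⟩
  · exact ⟨p, hp, Or.inr rfl⟩

section EquivalentSets

variable {m₁ m₂ : MD2 α β} (hr : Relator.RightUnique r)
  (h₁ : ∀ p ∈ m₁.rhsP, r p.1 p.2) (h₂ : ∀ p ∈ m₂.lhsP, r p.1 p.2)
include hr h₁ h₂

theorem anchor_eq_of_transGen_BR {u v : α} (h : Relation.TransGen (BR m₁ m₂) u v) :
    anchor r (Sum.inl u) = anchor r (Sum.inl v) :=
  h.to_reflTransGen.apply_eq (f := anchor r ∘ Sum.inl) fun _ _ huv =>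
    huv.elim (anchor_eq_of_reflTransGen hr h₁) (anchor_eq_of_reflTransGen hr h₂)

theorem anchor_eq_of_transGen_BS {u v : β} (h : Relation.TransGen (BS m₁ m₂) u v) :
    anchor r (Sum.inr u) = anchor r (Sum.inr v) :=
  h.to_reflTransGen.apply_eq (f := anchor r ∘ Sum.inr) fun _ _ huv =>
    huv.elim (anchor_eq_of_reflTransGen hr h₁) (anchor_eq_of_reflTransGen hr h₂)

end EquivalentSets

theorem anchor_ne_of_lhsAttrs_disjoint (hr : Relator.RightUnique r) {m₁ m₂ : MD2 α β}
    (h₁ : ∀ p ∈ m₁.lhsP, r p.1 p.2) (h₂ : ∀ p ∈ m₂.lhsP, r p.1 p.2)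
    (hdisj : lhsAttrs m₁ ∩ lhsAttrs m₂ = ∅) ⦃x y : α ⊕ β⦄
    (hx : x ∈ lhsAttrs m₂) (hy : y ∈ lhsAttrs m₁) : anchor r x ≠ anchor r y := by
  intro hxy
  have hmem : anchor r y ∈ lhsAttrs m₁ ∩ lhsAttrs m₂ :=
    ⟨anchor_mem_lhsAttrs hr h₁ hy, hxy ▸ anchor_mem_lhsAttrs hr h₂ hx⟩
  simp [hdisj] at hmem

end MD2

open MD2 in
theorem no_bound_equivalent_set_general [DecidableEq α] [DecidableEq β]
    (m₁ m₂ : MD2 α β)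
    (hpp : PairPreserving m₁ m₂)
    (hdisj : lhsAttrs m₁ ∩ lhsAttrs m₂ = ∅) :
    (∀ (E : Set α) (u : α), E = {v | Relation.TransGen (BR m₁ m₂) u v} →
        (∃ a ∈ E, Sum.inl a ∈ lhsAttrs m₂) → ∀ a ∈ E, Sum.inl a ∉ lhsAttrs m₁) ∧
    (∀ (E : Set β) (u : β), E = {v | Relation.TransGen (BS m₁ m₂) u v} →
        (∃ b ∈ E, Sum.inr b ∈ lhsAttrs m₂) → ∀ b ∈ E, Sum.inr b ∉ lhsAttrs m₁) := by
  set r : α → β → Prop := fun a b => (a, b) ∈ conjs m₁ ∪ conjs m₂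
  have hr : Relator.RightUnique r := fun a b b' => hpp a b b'
  have hl₁ : ∀ p ∈ m₁.lhsP, r p.1 p.2 := by intro p hp; simp [r, conjs, hp]
  have hr₁ : ∀ p ∈ m₁.rhsP, r p.1 p.2 := by intro p hp; simp [r, conjs, hp]
  have hl₂ : ∀ p ∈ m₂.lhsP, r p.1 p.2 := by intro p hp; simp [r, conjs, hp]
  have hne := anchor_ne_of_lhsAttrs_disjoint hr hl₁ hl₂ hdisj
  constructor
  · rintro E u rfl ⟨a, hua, ha⟩ a' hua' ha'
    exact hne ha ha' <| (anchor_eq_of_transGen_BR hr hr₁ hl₂ hua).symm.trans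
      (anchor_eq_of_transGen_BR hr hr₁ hl₂ hua')
  · rintro E u rfl ⟨b, hub, hb⟩ b' hub' hb'
    exact hne hb hb' <| (anchor_eq_of_transGen_BS hr hr₁ hl₂ hub).symm.trans
      (anchor_eq_of_transGen_BS hr hr₁ hl₂ hub')

/-- For a linear pair `(m₁, m₂)` over distinct predicates `R` and `S` that is
pair-preserving and satisfies `LHS(m₁) ∩ LHS(m₂) = ∅`, no `R`-equivalent set and
no `S`-equivalent set is bound: every equivalence class `E` of `TC(B_R)`
(resp. `TC(B_S)`) containing an attribute of `LHS(m₂)` satisfies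
`E ∩ LHS(m₁) = ∅`. -/
theorem no_bound_equivalent_set [DecidableEq α] [DecidableEq β]
    (m₁ m₂ : MD2 α β)
    (hlin : LinearPair m₁ m₂)
    (hpp : PairPreserving m₁ m₂)
    (hdisj : lhsAttrs m₁ ∩ lhsAttrs m₂ = ∅) :
    (∀ (E : Set α) (u : α), E = {v | Relation.TransGen (BR m₁ m₂) u v} →
        (∃ a ∈ E, Sum.inl a ∈ lhsAttrs m₂) → ∀ a ∈ E, Sum.inl a ∉ lhsAttrs m₁) ∧
    (∀ (E : Set β) (u : β), E = {v | Relation.TransGen (BS m₁ m₂) u v} →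
        (∃ b ∈ E, Sum.inr b ∈ lhsAttrs m₂) → ∀ b ∈ E, Sum.inr b ∉ lhsAttrs m₁) :=
  no_bound_equivalent_set_general m₁ m₂ hpp hdisj
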